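/- arXiv:1503.06543 — 2 statements merged into one kernel-verified Lean document; each statement's English description precedes it below -/
import Mathlib

section
/- Under the hypotheses of the majorization theorem, if additionally φ(r) ≤ r and v = φ(v) has a unique solution in [0,r], then T has a unique fixed point x_* in B̄(x_0, r), and for any starting point x̃_0 ∈ B̄(x_0, r) the sequence x̃_{k+1} = T(x̃_k) converges to x_*. -/
open Set Filter Metric Topology Function

/-!
The scalar iterates `φⁿ 0` increase and `φⁿ r` decrease, and both tend to the unique fixed point
of `φ` in `[0, r]`. Following the segment from `x` to `y` at unit speed, the point reached at time
`v` lies in `closedBall x0 v`, where `T` is `φ' v`-Lipschitz; integrating this bound gives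
`‖T y - T x‖ ≤ φ s - φ t` whenever `‖x - x0‖ ≤ t` and `‖y - x‖ ≤ s - t ≤ r - t`. Consequently
`‖Tⁿ⁺¹ x0 - Tⁿ x0‖ ≤ φⁿ⁺¹ 0 - φⁿ 0`, so the orbit of `x0` is Cauchy and converges to a fixed point
`x⋆`, and `‖Tⁿ y - Tⁿ x0‖ ≤ φⁿ r - φⁿ 0 → 0` for every `y` in the ball, which gives convergence of
every orbit to `x⋆` and uniqueness of the fixed point.
-/

theorem sub_le_sub_of_sub_le_deriv_mul_sub {f g g' : ℝ → ℝ} {a b : ℝ} (hab : a ≤ b)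
    (hf : ContinuousOn f (Icc a b)) (hg : ∀ x ∈ Icc a b, HasDerivAt g (g' x) x)
    (hfg : ∀ x ∈ Icc a b, ∀ y ∈ Icc a b, x < y → f y - f x ≤ g' y * (y - x)) :
    f b - f a ≤ g b - g a := by
  have hmem : ∀ τ ∈ Icc a b, a + b - τ ∈ Icc a b := fun τ hτ =>
    ⟨by linarith [hτ.2], by linarith [hτ.1]⟩
  -- `g' y` controls the difference quotients of `f` only to the left of `y`; the reflection
  -- `τ ↦ a + b - τ` turns them into right ones, as the fencing lemma requires
  set K : ℝ → ℝ := fun τ => g (a + b - τ) - f (a + b - τ)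
  have hKcont : ContinuousOn K (Icc a b) := by
    refine ContinuousOn.sub (fun τ hτ => ?_) (hf.comp (by fun_prop) hmem)
    exact ((hg _ (hmem τ hτ)).comp_const_sub (a + b) τ).continuousAt.continuousWithinAt
  have hslope : ∀ τ ∈ Ico a b, ∀ ε, 0 < ε → ∃ᶠ σ in 𝓝[>] τ, slope K τ σ < ε := by
    intro τ hτ ε hε
    have hy := hmem τ (Ico_subset_Icc_self hτ)
    have hG := (((hg _ hy).comp_const_sub (a + b) τ).hasDerivWithinAt (s := Ioi τ)).limsup_slope_le'
      (lt_irrefl τ) (show -g' (a + b - τ) < ε - g' (a + b - τ) by linarith)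
    refine Eventually.frequently ?_
    filter_upwards [hG, Ioc_mem_nhdsGT hτ.2] with σ hσG hσ
    have hfσ := hfg _ (hmem σ (Ioc_subset_Icc_self ⟨hτ.1.trans_lt hσ.1, hσ.2⟩)) _ hy
      (by linarith [hσ.1])
    have hστ : 0 < σ - τ := sub_pos.2 hσ.1
    rw [slope_def_field, div_lt_iff₀ hστ] at hσG ⊢
    linarith
  have hK_le := image_le_of_liminf_slope_right_le_deriv_boundary (B := fun _ => K a) hKcont le_rfl
    continuousOn_const (fun _ _ => hasDerivWithinAt_const _ _ _) hslope (right_mem_Icc.2 hab)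
  simp only [K, add_sub_cancel_right, add_sub_cancel_left] at hK_le
  linarith

section Iterate

variable {α : Type*}

theorem MonotoneOn.monotone_iterate_of_le_map [Preorder α] {f : α → α} {s : Set α} {x : α}
    (hf : MonotoneOn f s) (hs : MapsTo f s s) (hx : x ∈ s) (hle : x ≤ f x) :
    Monotone fun n => f^[n] x := by
  refine monotone_nat_of_le_succ fun n => ?_
  induction n with
  | zero => exact hle
  | succ n ih =>
    rw [iterate_succ_apply', iterate_succ_apply' f (n + 1)]
    exact hf (hs.iterate n hx) (hs.iterate (n + 1) hx) ih

theorem MonotoneOn.antitone_iterate_of_map_le [Preorder α] {f : α → α} {s : Set α} {x : α}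
    (hf : MonotoneOn f s) (hs : MapsTo f s s) (hx : x ∈ s) (hle : f x ≤ x) :
    Antitone fun n => f^[n] x :=
  hf.dual.monotone_iterate_of_le_map hs hx hle

theorem isFixedPt_of_tendsto_iterate_of_continuousWithinAt [TopologicalSpace α] [T2Space α]
    {f : α → α} {s : Set α} {x y : α} (hx : ∀ n, f^[n] x ∈ s)
    (hy : Tendsto (fun n => f^[n] x) atTop (𝓝 y)) (hf : ContinuousWithinAt f s y) :
    IsFixedPt f y := by
  refine tendsto_nhds_unique ((tendsto_add_atTop_iff_nat 1).1 ?_) hy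
  simp only [iterate_succ_apply']
  exact hf.tendsto.comp (tendsto_nhdsWithin_iff.2 ⟨hy, Eventually.of_forall hx⟩)

theorem tendsto_iterate_of_monotoneOn [ConditionallyCompleteLinearOrder α] [TopologicalSpace α]
    [OrderTopology α] {f : α → α} {a b w : α} (hf : MonotoneOn f (Icc a b))
    (hmaps : MapsTo f (Icc a b) (Icc a b)) (hcont : ContinuousOn f (Icc a b))
    (huniq : ∀ y ∈ Icc a b, f y = y → y = w) {x : α} (hx : x ∈ Icc a b)
    (hcomp : x ≤ f x ∨ f x ≤ x) : Tendsto (fun n => f^[n] x) atTop (𝓝 w) := by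
  have hmem : ∀ n, f^[n] x ∈ Icc a b := fun n => hmaps.iterate n hx
  have hlim : ∀ y, Tendsto (fun n => f^[n] x) atTop (𝓝 y) →
      Tendsto (fun n => f^[n] x) atTop (𝓝 w) := fun y hy => by
    have hy_mem : y ∈ Icc a b := isClosed_Icc.mem_of_tendsto hy (Eventually.of_forall hmem)
    rwa [← huniq y hy_mem
      (isFixedPt_of_tendsto_iterate_of_continuousWithinAt hmem hy (hcont y hy_mem))]
  rcases hcomp with hle | hle
  · exact hlim _ (tendsto_atTop_ciSup (hf.monotone_iterate_of_le_map hmaps hx hle)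
      ⟨b, forall_mem_range.2 fun n => (hmem n).2⟩)
  · exact hlim _ (tendsto_atTop_ciInf (hf.antitone_iterate_of_map_le hmaps hx hle)
      ⟨a, forall_mem_range.2 fun n => (hmem n).1⟩)

theorem dist_le_sub_of_dist_succ_le [PseudoMetricSpace α] {x : ℕ → α} {t : ℕ → ℝ}
    (hx : ∀ k, dist (x (k + 1)) (x k) ≤ t (k + 1) - t k) {m n : ℕ} (hnm : n ≤ m) :
    dist (x m) (x n) ≤ t m - t n := by
  induction m, hnm using Nat.le_induction with
  | base => simp
  | succ m _ ih => linarith [dist_triangle (x (m + 1)) (x m) (x n), hx m]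

theorem cauchySeq_of_dist_succ_le_sub [PseudoMetricSpace α] {x : ℕ → α} {t : ℕ → ℝ}
    (ht : CauchySeq t) (hx : ∀ k, dist (x (k + 1)) (x k) ≤ t (k + 1) - t k) : CauchySeq x := by
  have hdist : ∀ m n, dist (x m) (x n) ≤ dist (t m) (t n) := fun m n => by
    rcases le_total n m with h | h
    · exact (dist_le_sub_of_dist_succ_le hx h).trans ((le_abs_self _).trans (Real.dist_eq _ _).ge)
    · rw [dist_comm, dist_comm (t m)]
      exact (dist_le_sub_of_dist_succ_le hx h).trans ((le_abs_self _).trans (Real.dist_eq _ _).ge)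
  exact Metric.cauchySeq_iff.2 fun ε hε => (Metric.cauchySeq_iff.1 ht ε hε).imp
    fun _ hN m hm n hn => (hdist m n).trans_lt (hN m hm n hn)

end Iterate

structure IsLipschitzMajorant {X : Type*} [NormedAddCommGroup X] (T : X → X) (x0 : X) (r : ℝ)
    (φ φ' : ℝ → ℝ) : Prop where
  hasDerivAt : ∀ v ∈ Icc 0 r, HasDerivAt φ (φ' v) v
  deriv_nonneg : ∀ v ∈ Icc 0 r, 0 ≤ φ' v
  norm_sub_le : ∀ v ∈ Icc 0 r, ∀ x ∈ closedBall x0 v, ∀ y ∈ closedBall x0 v,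
    ‖T x - T y‖ ≤ φ' v * ‖x - y‖

namespace IsLipschitzMajorant

variable {X : Type*} [NormedAddCommGroup X] {T : X → X} {x0 : X} {r : ℝ} {φ φ' : ℝ → ℝ}

theorem dist_le (hM : IsLipschitzMajorant T x0 r φ φ') {v : ℝ} (hv : v ∈ Icc 0 r) {x y : X}
    (hx : x ∈ closedBall x0 v) (hy : y ∈ closedBall x0 v) :
    dist (T x) (T y) ≤ φ' v * dist x y := by
  simpa only [dist_eq_norm] using hM.norm_sub_le v hv x hx y hy

theorem continuousOn_closedBall (hM : IsLipschitzMajorant T x0 r φ φ') {v : ℝ}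
    (hv : v ∈ Icc 0 r) : ContinuousOn T (closedBall x0 v) :=
  (LipschitzOnWith.of_dist_le' fun _ hx _ hy => hM.dist_le hv hx hy).continuousOn

theorem continuousOn_Icc (hM : IsLipschitzMajorant T x0 r φ φ') : ContinuousOn φ (Icc 0 r) :=
  fun v hv => (hM.hasDerivAt v hv).continuousAt.continuousWithinAt

theorem monotoneOn_Icc (hM : IsLipschitzMajorant T x0 r φ φ') : MonotoneOn φ (Icc 0 r) :=
  monotoneOn_of_hasDerivWithinAt_nonneg (convex_Icc 0 r) hM.continuousOn_Icc
    (fun v hv => (hM.hasDerivAt v (interior_subset hv)).hasDerivWithinAt)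
    fun v hv => hM.deriv_nonneg v (interior_subset hv)

theorem dist_map_le_sub [NormedSpace ℝ X] (hM : IsLipschitzMajorant T x0 r φ φ') {t s : ℝ}
    (hts : t ≤ s) (hsr : s ≤ r) {x y : X} (hx : x ∈ closedBall x0 t)
    (hy : y ∈ closedBall x (s - t)) : dist (T y) (T x) ≤ φ s - φ t := by
  obtain rfl | hts := hts.eq_or_lt
  · obtain rfl : y = x := by simpa using hy
    simp
  have ht : 0 ≤ t := dist_nonneg.trans hx
  set e : X := (s - t)⁻¹ • (y - x)
  have he : ‖e‖ ≤ 1 := by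
    rw [norm_smul, Real.norm_of_nonneg (inv_nonneg.2 (sub_pos.2 hts).le)]
    exact inv_mul_le_one_of_le₀ (by rwa [← dist_eq_norm]) (sub_pos.2 hts).le
  -- `z` leaves `x` towards `y` at unit speed at time `t`, so `z v` stays in `closedBall x0 v`
  set z : ℝ → X := fun v => x + (v - t) • e
  have hz_dist : ∀ v w, v ≤ w → dist (z w) (z v) ≤ w - v := fun v w hvw => by
    calc dist (z w) (z v) = (w - v) * ‖e‖ := by
          rw [dist_eq_norm, ← Real.norm_of_nonneg (sub_nonneg.2 hvw), ← norm_smul]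
          simp only [z]; congr 1; module
      _ ≤ w - v := mul_le_of_le_one_right (sub_nonneg.2 hvw) he
  have hz_mem : ∀ v ∈ Icc t s, z v ∈ closedBall x0 v := fun v hv => by
    have hzt := hz_dist t v hv.1
    simp only [z, sub_self, zero_smul, add_zero] at hzt
    rw [mem_closedBall] at hx ⊢
    linarith [dist_triangle (z v) x x0]
  have hIcc : ∀ v ∈ Icc t s, v ∈ Icc 0 r := fun v hv => ⟨ht.trans hv.1, hv.2.trans hsr⟩
  have hzt : z t = x := by simp [z]
  have hzs : z s = y := by simp [z, e, smul_smul, mul_inv_cancel₀ (sub_pos.2 hts).ne']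
  have hcont : ContinuousOn (fun v => dist (T (z v)) (T x)) (Icc t s) :=
    continuous_dist.comp_continuousOn <| ContinuousOn.prodMk
      ((hM.continuousOn_closedBall (hIcc s (right_mem_Icc.2 hts.le))).comp (by fun_prop)
        fun v (hv : v ∈ Icc t s) => closedBall_subset_closedBall hv.2 (hz_mem v hv))
      continuousOn_const
  have key := sub_le_sub_of_sub_le_deriv_mul_sub hts.le hcont
    (fun v hv => hM.hasDerivAt v (hIcc v hv)) fun v hv w hw hvw => ?_
  · simpa [hzt, hzs] using key
  calc dist (T (z w)) (T x) - dist (T (z v)) (T x) ≤ dist (T (z w)) (T (z v)) := by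
        linarith [dist_triangle (T (z w)) (T (z v)) (T x)]
    _ ≤ φ' w * dist (z w) (z v) := hM.dist_le (hIcc w hw) (hz_mem w hw)
        (closedBall_subset_closedBall hvw.le (hz_mem v hv))
    _ ≤ φ' w * (w - v) :=
        mul_le_mul_of_nonneg_left (hz_dist v w hvw.le) (hM.deriv_nonneg w (hIcc w hw))

theorem iterate_mem_closedBall_and_dist_le [NormedSpace ℝ X]
    (hM : IsLipschitzMajorant T x0 r φ φ') (h0 : dist (T x0) x0 ≤ φ 0)
    (ht : Monotone fun n => φ^[n] 0) (htr : ∀ n, φ^[n] 0 ≤ r) (n : ℕ) :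
    T^[n] x0 ∈ closedBall x0 (φ^[n] 0) ∧
      dist (T^[n + 1] x0) (T^[n] x0) ≤ φ^[n + 1] 0 - φ^[n] 0 := by
  induction n with
  | zero => simpa using h0
  | succ n ih =>
    obtain ⟨hmem, hstep⟩ := ih
    refine ⟨?_, ?_⟩
    · rw [mem_closedBall] at hmem ⊢
      linarith [dist_triangle (T^[n + 1] x0) (T^[n] x0) x0]
    · simpa only [iterate_succ_apply'] using
        hM.dist_map_le_sub (ht n.le_succ) (htr _) hmem (mem_closedBall.2 hstep)

theorem dist_iterate_le_sub [NormedSpace ℝ X] (hM : IsLipschitzMajorant T x0 r φ φ')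
    {t s : ℝ} {x y : X} (hx : ∀ n, T^[n] x ∈ closedBall x0 (φ^[n] t))
    (hts : ∀ n, φ^[n] t ≤ φ^[n] s) (hsr : ∀ n, φ^[n] s ≤ r) (hy : y ∈ closedBall x (s - t))
    (n : ℕ) : dist (T^[n] y) (T^[n] x) ≤ φ^[n] s - φ^[n] t := by
  induction n with
  | zero => simpa using hy
  | succ n ih =>
    simpa only [iterate_succ_apply'] using
      hM.dist_map_le_sub (hts n) (hsr n) (hx n) (mem_closedBall.2 ih)

theorem exists_isFixedPt_tendsto_iterate [NormedSpace ℝ X] [CompleteSpace X]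
    (hM : IsLipschitzMajorant T x0 r φ φ') (h0 : dist (T x0) x0 ≤ φ 0) {w : ℝ}
    (ht_mono : Monotone fun n => φ^[n] 0) (ht : Tendsto (fun n => φ^[n] 0) atTop (𝓝 w))
    (hu : Tendsto (fun n => φ^[n] r) atTop (𝓝 w)) (htu : ∀ n, φ^[n] 0 ≤ φ^[n] r)
    (hur : ∀ n, φ^[n] r ≤ r) :
    ∃ xstar ∈ closedBall x0 r, IsFixedPt T xstar ∧
      ∀ y ∈ closedBall x0 r, Tendsto (fun n => T^[n] y) atTop (𝓝 xstar) := by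
  have horbit := hM.iterate_mem_closedBall_and_dist_le h0 ht_mono fun n => (htu n).trans (hur n)
  obtain ⟨xstar, hxstar⟩ := cauchySeq_tendsto_of_complete
    (cauchySeq_of_dist_succ_le_sub (x := fun n => T^[n] x0) ht.cauchySeq fun n => (horbit n).2)
  have hx_mem : ∀ n, T^[n] x0 ∈ closedBall x0 r := fun n =>
    closedBall_subset_closedBall ((htu n).trans (hur n)) (horbit n).1
  have hxstar_mem := isClosed_closedBall.mem_of_tendsto hxstar (Eventually.of_forall hx_mem)
  refine ⟨xstar, hxstar_mem, isFixedPt_of_tendsto_iterate_of_continuousWithinAt hx_mem hxstar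
    (hM.continuousOn_closedBall (right_mem_Icc.2 (htu 0)) xstar hxstar_mem), fun y hy => ?_⟩
  refine hxstar.congr_dist
    (squeeze_zero (fun _ => dist_nonneg) (fun n => ?_) (sub_self w ▸ hu.sub ht))
  rw [dist_comm]
  exact hM.dist_iterate_le_sub (fun n => (horbit n).1) htu hur (by simpa using hy) n

end IsLipschitzMajorant

theorem stmt_3_general {X : Type*} [NormedAddCommGroup X] [NormedSpace ℝ X] [CompleteSpace X]
    (T : X → X) (x0 : X) (r : ℝ)
    (φ φ' : ℝ → ℝ)
    (hderiv : ∀ v ∈ Icc (0:ℝ) r, HasDerivAt φ (φ' v) v)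
    (hφ'nonneg : ∀ v ∈ Icc (0:ℝ) r, 0 ≤ φ' v)
    (hlip : ∀ v ∈ Icc (0:ℝ) r, ∀ x ∈ closedBall x0 v, ∀ y ∈ closedBall x0 v,
      ‖T x - T y‖ ≤ φ' v * ‖x - y‖)
    (hη : ‖T x0 - x0‖ ≤ φ 0)
    (hφr : φ r ≤ r)
    (huniq : ∃! w, w ∈ Icc (0:ℝ) r ∧ φ w = w) :
    ∃ xstar ∈ closedBall x0 r, T xstar = xstar ∧
      (∀ y ∈ closedBall x0 r, T y = y → y = xstar) ∧
      (∀ y0 ∈ closedBall x0 r, Tendsto (fun k => T^[k] y0) atTop (nhds xstar)) := by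
  obtain ⟨w, hw, hw_uniq⟩ := huniq
  have hr : 0 ≤ r := hw.1.1.trans hw.1.2
  have hM : IsLipschitzMajorant T x0 r φ φ' := ⟨hderiv, hφ'nonneg, hlip⟩
  have h0 : 0 ≤ φ 0 := (norm_nonneg _).trans hη
  have hφ_maps : MapsTo φ (Icc 0 r) (Icc 0 r) :=
    hM.monotoneOn_Icc.mapsTo_Icc.mono_right (Icc_subset_Icc h0 hφr)
  have hfix : ∀ v ∈ Icc 0 r, φ v = v → v = w := fun v hv hφv => hw_uniq v ⟨hv, hφv⟩
  have ht_mono := hM.monotoneOn_Icc.monotone_iterate_of_le_map hφ_maps (left_mem_Icc.2 hr) h0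
  have hu_anti := hM.monotoneOn_Icc.antitone_iterate_of_map_le hφ_maps (right_mem_Icc.2 hr) hφr
  have ht_lim := tendsto_iterate_of_monotoneOn hM.monotoneOn_Icc hφ_maps hM.continuousOn_Icc hfix
    (left_mem_Icc.2 hr) (.inl h0)
  have hu_lim := tendsto_iterate_of_monotoneOn hM.monotoneOn_Icc hφ_maps hM.continuousOn_Icc hfix
    (right_mem_Icc.2 hr) (.inr hφr)
  obtain ⟨xstar, hxstar_mem, hTxstar, hconv⟩ := hM.exists_isFixedPt_tendsto_iterate
    (by rwa [dist_eq_norm]) ht_mono ht_lim hu_lim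
    (fun n => (ht_mono.ge_of_tendsto ht_lim n).trans (hu_anti.le_of_tendsto hu_lim n))
    (fun n => (hφ_maps.iterate n (right_mem_Icc.2 hr)).2)
  refine ⟨xstar, hxstar_mem, hTxstar, fun y hy hTy => ?_, hconv⟩
  exact tendsto_nhds_unique (by simp only [iterate_fixed hTy, tendsto_const_nhds]) (hconv y hy)

theorem stmt_3 {X : Type*} [NormedAddCommGroup X] [NormedSpace ℝ X] [CompleteSpace X]
    (T : X → X) (x0 : X) (r : ℝ) (hr : 0 < r)
    (φ φ' : ℝ → ℝ)
    (hderiv : ∀ v ∈ Icc (0:ℝ) r, HasDerivAt φ (φ' v) v)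
    (hφ'cont : ContinuousOn φ' (Icc 0 r))
    (hφ'nonneg : ∀ v ∈ Icc (0:ℝ) r, 0 ≤ φ' v)
    (hφ'mono : MonotoneOn φ' (Icc 0 r))
    (hlip : ∀ v ∈ Icc (0:ℝ) r, ∀ x ∈ closedBall x0 v, ∀ y ∈ closedBall x0 v,
      ‖T x - T y‖ ≤ φ' v * ‖x - y‖)
    (hη : ‖T x0 - x0‖ ≤ φ 0)
    (hφr : φ r ≤ r)
    (huniq : ∃! w, w ∈ Icc (0:ℝ) r ∧ φ w = w) :
    ∃ xstar ∈ closedBall x0 r, T xstar = xstar ∧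
      (∀ y ∈ closedBall x0 r, T y = y → y = xstar) ∧
      (∀ y0 ∈ closedBall x0 r, Tendsto (fun k => T^[k] y0) atTop (nhds xstar)) :=
  stmt_3_general T x0 r φ φ' hderiv hφ'nonneg hlip hη hφr huniq
end

section
/- In the Hölder setting with strict inequality l₀ η^α < (1-ν)^{α+1}(α/(1+α))^α and R ≥ v_{**}, the solution x_* of F(x) = 0 is unique in the open ball B(x_0, v_{**}), where v_{**} is the maximal root of g(v) = (1+α)^{-1} l₀ v^{α+1} - (1-ν)v + η on [0,R]. -/
open Set Filter Metric

open scoped Topology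

/-!
Put `P x = x - B (F x)`: zeros of `F` are fixed points of `P`, and `‖P' x‖ ≤ φ ‖x - x₀‖` with
`φ r = l₀ r ^ α + ν`. Let `Φ` be the primitive of `φ` with `Φ 0 = 0`, so that `g = η + Φ - id`.
The strict condition on `η` makes `g` negative at the point where `φ = 1`, hence `g` has a root `r`
below it, with `φ r < 1`. Comparing `P` with `Φ` along segments, the ball `B̄(x₀, r)` is invariant
under `P`, and every fixed point `p ∈ B(x₀, v**)` attracts it: the contraction factor towards `p`
is `φ r` if `‖p - x₀‖ ≤ r`, and otherwise the secant slope of `Φ` on `[r, ‖p - x₀‖]`, which is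
`< 1` because the strictly convex `g` is negative strictly between its roots `r` and `v**`. So the
Picard iterates of `P` from `x₀` converge to every zero of `F` in `B(x₀, v**)`.
-/

theorem tendsto_iterate_of_dist_le_mul {α : Type*} [PseudoMetricSpace α] {P : α → α}
    {s : Set α} {x p : α} {q : ℝ} (hs : MapsTo P s s) (hx : x ∈ s) (hq : q < 1)
    (hP : ∀ z ∈ s, dist (P z) p ≤ q * dist z p) :
    Tendsto (fun n => P^[n] x) atTop (𝓝 p) := by
  set q' := max q 0
  have hq' : 0 ≤ q' := le_max_right _ _
  have hP' : ∀ z ∈ s, dist (P z) p ≤ q' * dist z p := fun z hz =>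
    (hP z hz).trans (mul_le_mul_of_nonneg_right (le_max_left _ _) dist_nonneg)
  have hiter : ∀ n, dist (P^[n] x) p ≤ q' ^ n * dist x p := by
    intro n
    induction n with
    | zero => simp
    | succ n ih =>
      calc dist (P^[n + 1] x) p ≤ q' * dist (P^[n] x) p := by
            rw [Function.iterate_succ_apply']; exact hP' _ (hs.iterate n hx)
        _ ≤ q' * (q' ^ n * dist x p) := mul_le_mul_of_nonneg_left ih hq'
        _ = q' ^ (n + 1) * dist x p := by ring
  refine tendsto_iff_dist_tendsto_zero.2 (squeeze_zero (fun n => dist_nonneg) hiter ?_)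
  simpa using (tendsto_pow_atTop_nhds_zero_of_lt_one hq' (max_lt hq zero_lt_one)).mul_const
    (dist x p)

theorem convexOn_of_hasDerivAt_of_monotoneOn {D : Set ℝ} (hD : Convex ℝ D) {Φ φ : ℝ → ℝ}
    (hΦ : ∀ t, HasDerivAt Φ (φ t) t) (hφ : MonotoneOn φ D) : ConvexOn ℝ D Φ := by
  refine MonotoneOn.convexOn_of_deriv hD (fun t _ => (hΦ t).continuousAt.continuousWithinAt)
    (fun t _ => (hΦ t).differentiableAt.differentiableWithinAt) ?_
  rw [show deriv Φ = φ from funext fun t => (hΦ t).deriv]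
  exact hφ.mono interior_subset

theorem strictConvexOn_of_hasDerivAt_of_strictMonoOn {D : Set ℝ} (hD : Convex ℝ D)
    {Φ φ : ℝ → ℝ} (hΦ : ∀ t, HasDerivAt Φ (φ t) t) (hφ : StrictMonoOn φ D) :
    StrictConvexOn ℝ D Φ := by
  refine StrictMonoOn.strictConvexOn_of_deriv hD
    (fun t _ => (hΦ t).continuousAt.continuousWithinAt) ?_
  rw [show deriv Φ = φ from funext fun t => (hΦ t).deriv]
  exact hφ.mono interior_subset

theorem slope_lt_one_of_add_eq_self {Φ : ℝ → ℝ} (hΦ : StrictConvexOn ℝ (Ici 0) Φ)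
    {η r s a : ℝ} (hr : 0 ≤ r) (hr_root : η + Φ r = r) (hs_root : η + Φ s = s)
    (hra : r < a) (has : a < s) : slope Φ r a < 1 := by
  rw [slope_def_field]
  calc (Φ a - Φ r) / (a - r)
      < (Φ s - Φ r) / (s - r) := hΦ.secant_strict_mono hr (hr.trans hra.le)
        (hr.trans (hra.trans has).le) hra.ne' (hra.trans has).ne' has
    _ = 1 := (div_eq_one_iff_eq (sub_pos.2 (hra.trans has)).ne').2 (by linarith)

section Majorant

variable {X : Type*} [NormedAddCommGroup X] [NormedSpace ℝ X]

theorem norm_add_smul_sub_sub_le (x0 u w : X) {t : ℝ} (ht : t ∈ Icc (0 : ℝ) 1) :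
    ‖w + t • (u - w) - x0‖ ≤ ‖w - x0‖ + t * (‖u - x0‖ - ‖w - x0‖) := by
  have h := (convexOn_univ_norm (E := X)).2 (mem_univ (w - x0)) (mem_univ (u - x0))
    (sub_nonneg.2 ht.2) ht.1 (sub_add_cancel 1 t)
  have e : w + t • (u - w) - x0 = (1 - t) • (w - x0) + t • (u - x0) := by module
  simp only [smul_eq_mul] at h
  rw [e]
  linarith

variable {P : X → X} {P' : X → X →L[ℝ] X} {x0 : X} {R : ℝ} {Φ φ : ℝ → ℝ}

theorem norm_image_sub_le_slope_mul
    (hP : ∀ x ∈ closedBall x0 R, HasFDerivAt P (P' x) x)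
    (hP' : ∀ x ∈ closedBall x0 R, ‖P' x‖ ≤ φ ‖x - x0‖)
    (hΦ : ∀ t, HasDerivAt Φ (φ t) t) (hφ : MonotoneOn φ (Ici 0))
    {u w : X} (hu : u ∈ closedBall x0 R)
    (hlt : ‖w - x0‖ < ‖u - x0‖) :
    ‖P u - P w‖ ≤ slope Φ ‖w - x0‖ ‖u - x0‖ * ‖u - w‖ := by
  set a := ‖u - x0‖
  set b := ‖w - x0‖
  have hab : 0 < a - b := sub_pos.2 hlt
  set γ : ℝ → X := fun t => w + t • (u - w)
  set ρ : ℝ → ℝ := fun t => b + t * (a - b)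
  have hγρ : ∀ t ∈ Icc (0 : ℝ) 1, ‖γ t - x0‖ ≤ ρ t := fun t ht =>
    norm_add_smul_sub_sub_le x0 u w ht
  have hγ : ∀ t ∈ Icc (0 : ℝ) 1, γ t ∈ closedBall x0 R := fun t ht => by
    refine mem_closedBall_iff_norm.2 ((hγρ t ht).trans ?_)
    have : ρ t ≤ a := by nlinarith [ht.2]
    exact this.trans (mem_closedBall_iff_norm.1 hu)
  have hf : ∀ t ∈ Icc (0 : ℝ) 1,
      HasDerivAt (fun t => P (γ t) - P w) (P' (γ t) (u - w)) t := fun t ht => by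
    have hγ' : HasDerivAt γ (u - w) t :=
      (((hasDerivAt_id t).smul_const (u - w)).const_add w).congr_deriv (one_smul ℝ _)
    exact ((hP _ (hγ t ht)).comp_hasDerivAt t hγ').sub_const (P w)
  have hf' : ∀ t ∈ Ico (0 : ℝ) 1, ‖P' (γ t) (u - w)‖ ≤ φ (ρ t) * ‖u - w‖ := fun t ht => by
    have ht' := Ico_subset_Icc_self ht
    have hρ : 0 ≤ ρ t := by have := ht.1; positivity
    refine ((P' _).le_opNorm _).trans (mul_le_mul_of_nonneg_right ?_ (norm_nonneg _))
    exact (hP' _ (hγ t ht')).trans (hφ (norm_nonneg _) hρ (hγρ t ht'))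
  have hB : ∀ t, HasDerivAt (fun t => (Φ (ρ t) - Φ b) / (a - b) * ‖u - w‖)
      (φ (ρ t) * ‖u - w‖) t := fun t => by
    have hρ' : HasDerivAt ρ (a - b) t :=
      (((hasDerivAt_id t).mul_const (a - b)).const_add b).congr_deriv (one_mul _)
    refine ((((hΦ (ρ t)).comp t hρ').sub_const (Φ b)).div_const (a - b)).mul_const ‖u - w‖
      |>.congr_deriv ?_
    field_simp
  have key := image_norm_le_of_norm_deriv_right_le_deriv_boundary
    (fun t ht => (hf t ht).continuousAt.continuousWithinAt)
    (fun t ht => (hf t (Ico_subset_Icc_self ht)).hasDerivWithinAt) (by simp [γ, ρ]) hB hf'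
    (right_mem_Icc.2 zero_le_one)
  simpa [γ, ρ, slope_def_field] using key

theorem norm_image_sub_image_center_le
    (hP : ∀ x ∈ closedBall x0 R, HasFDerivAt P (P' x) x)
    (hP' : ∀ x ∈ closedBall x0 R, ‖P' x‖ ≤ φ ‖x - x0‖)
    (hΦ : ∀ t, HasDerivAt Φ (φ t) t) (hφ : MonotoneOn φ (Ici 0))
    {u : X} (hu : u ∈ closedBall x0 R) :
    ‖P u - P x0‖ ≤ Φ ‖u - x0‖ - Φ 0 := by
  rcases eq_or_ne u x0 with rfl | hne
  · simp
  have hpos : 0 < ‖u - x0‖ := norm_sub_pos_iff.2 hne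
  have h := norm_image_sub_le_slope_mul hP hP' hΦ hφ (w := x0) hu (by simpa using hpos)
  rwa [sub_self, norm_zero, slope_def_field, sub_zero, div_mul_cancel₀ _ hpos.ne'] at h

theorem norm_image_sub_le_mul_of_mem_closedBall
    (hP : ∀ x ∈ closedBall x0 R, HasFDerivAt P (P' x) x)
    (hP' : ∀ x ∈ closedBall x0 R, ‖P' x‖ ≤ φ ‖x - x0‖) (hφ : MonotoneOn φ (Ici 0))
    {r : ℝ} (hrR : r ≤ R) {u w : X} (hu : u ∈ closedBall x0 r) (hw : w ∈ closedBall x0 r) :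
    ‖P u - P w‖ ≤ φ r * ‖u - w‖ := by
  have hr : 0 ≤ r := dist_nonneg.trans hu
  refine (convex_closedBall x0 r).norm_image_sub_le_of_norm_hasFDerivWithin_le
    (fun x hx => (hP x (closedBall_subset_closedBall hrR hx)).hasFDerivWithinAt)
    (fun x hx => ?_) hw hu
  exact (hP' x (closedBall_subset_closedBall hrR hx)).trans
    (hφ (norm_nonneg _) hr (mem_closedBall_iff_norm.1 hx))

theorem tendsto_iterate_of_majorant
    (hP : ∀ x ∈ closedBall x0 R, HasFDerivAt P (P' x) x)
    (hP' : ∀ x ∈ closedBall x0 R, ‖P' x‖ ≤ φ ‖x - x0‖)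
    (hΦ : ∀ t, HasDerivAt Φ (φ t) t) (hφ : MonotoneOn φ (Ici 0))
    {η r ρ : ℝ} (hx0 : ‖P x0 - x0‖ ≤ η) (hr : 0 ≤ r) (hrR : r ≤ R) (hρR : ρ ≤ R)
    (hr_maps : η + (Φ r - Φ 0) ≤ r) (hφr : φ r < 1) (hslope : ∀ a ∈ Ioo r ρ, slope Φ r a < 1)
    {p : X} (hp : p ∈ ball x0 ρ) (hPp : P p = p) :
    Tendsto (fun n => P^[n] x0) atTop (𝓝 p) := by
  have hball : closedBall x0 r ⊆ closedBall x0 R := closedBall_subset_closedBall hrR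
  have hφ0 : 0 ≤ φ 0 :=
    (norm_nonneg _).trans (by simpa using hP' x0 (mem_closedBall_self (hr.trans hrR)))
  have hΦ_mono : MonotoneOn Φ (Ici 0) :=
    monotoneOn_of_hasDerivWithinAt_nonneg (convex_Ici 0)
      (fun t _ => (hΦ t).continuousAt.continuousWithinAt) (fun t _ => (hΦ t).hasDerivWithinAt)
      (fun t ht => hφ0.trans (hφ self_mem_Ici (interior_subset ht) (interior_subset ht)))
  have hmaps : MapsTo P (closedBall x0 r) (closedBall x0 r) := by
    intro z hz
    rw [mem_closedBall_iff_norm] at hz ⊢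
    calc ‖P z - x0‖ ≤ ‖P z - P x0‖ + ‖P x0 - x0‖ := norm_sub_le_norm_sub_add_norm_sub _ _ _
      _ ≤ (Φ ‖z - x0‖ - Φ 0) + η :=
          add_le_add (norm_image_sub_image_center_le hP hP' hΦ hφ
            (hball (mem_closedBall_iff_norm.2 hz))) hx0
      _ ≤ (Φ r - Φ 0) + η := by gcongr; exact hΦ_mono (norm_nonneg _) hr hz
      _ ≤ r := by linarith
  obtain ⟨q, hq, hcontr⟩ : ∃ q < 1, ∀ z ∈ closedBall x0 r, dist (P z) p ≤ q * dist z p := by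
    rcases le_or_gt ‖p - x0‖ r with hpr | hrp
    · refine ⟨φ r, hφr, fun z hz => ?_⟩
      rw [dist_eq_norm, dist_eq_norm]
      nth_rewrite 1 [← hPp]
      exact norm_image_sub_le_mul_of_mem_closedBall hP hP' hφ hrR hz
        (mem_closedBall_iff_norm.2 hpr)
    · refine ⟨slope Φ r ‖p - x0‖, hslope _ ⟨hrp, mem_ball_iff_norm.1 hp⟩, fun z hz => ?_⟩
      have hz' : ‖z - x0‖ ≤ r := mem_closedBall_iff_norm.1 hz
      have hΦ_convex := convexOn_of_hasDerivAt_of_monotoneOn (convex_Ici 0) hΦ hφ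
      have hsec : slope Φ ‖z - x0‖ ‖p - x0‖ ≤ slope Φ r ‖p - x0‖ := by
        rw [slope_comm, slope_comm Φ r]
        exact hΦ_convex.slope_mono (norm_nonneg _) ⟨norm_nonneg _, (hz'.trans_lt hrp).ne⟩
          ⟨hr, hrp.ne⟩ hz'
      rw [dist_comm, dist_comm z, dist_eq_norm, dist_eq_norm, ← hPp]
      refine (norm_image_sub_le_slope_mul hP hP' hΦ hφ ?_ (hz'.trans_lt hrp)).trans ?_
      · exact mem_closedBall_iff_norm.2 ((mem_ball_iff_norm.1 hp).le.trans hρR)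
      · rw [hPp]; exact mul_le_mul_of_nonneg_right hsec (norm_nonneg _)
  exact tendsto_iterate_of_dist_le_mul hmaps (mem_closedBall_self hr) hq hcontr

end Majorant

noncomputable def holderPrimitive (l0 α ν r : ℝ) : ℝ := l0 * r ^ (α + 1) / (α + 1) + ν * r

section Holder

variable {l0 α ν : ℝ}

theorem holderPrimitive_zero (hα : 0 ≤ α) : holderPrimitive l0 α ν 0 = 0 := by
  simp [holderPrimitive, Real.zero_rpow (by positivity : α + 1 ≠ 0)]

theorem hasDerivAt_holderPrimitive (hα : 0 ≤ α) (r : ℝ) :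
    HasDerivAt (holderPrimitive l0 α ν) (l0 * r ^ α + ν) r := by
  have hpow := Real.hasDerivAt_rpow_const (x := r) (p := α + 1) (Or.inr (by linarith))
  refine (((hpow.const_mul l0).div_const (α + 1)).add ((hasDerivAt_id r).const_mul ν))
    |>.congr_deriv ?_
  rw [add_sub_cancel_right]
  field_simp

theorem strictMonoOn_holderBound (hl0 : 0 < l0) (hα : 0 < α) :
    StrictMonoOn (fun r => l0 * r ^ α + ν) (Ici 0) := fun _ hs _ _ hst => by
  simpa using mul_lt_mul_of_pos_left (Real.rpow_lt_rpow hs hst hα) hl0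

theorem add_holderPrimitive_lt_of_holderCondition (hl0 : 0 < l0) (hα : 0 < α) (hν1 : ν < 1)
    {η : ℝ} (hη : 0 ≤ η) (hcond : l0 * η ^ α < (1 - ν) ^ (α + 1) * (α / (1 + α)) ^ α) :
    η + holderPrimitive l0 α ν (((1 - ν) / l0) ^ α⁻¹) < ((1 - ν) / l0) ^ α⁻¹ := by
  set v := ((1 - ν) / l0) ^ α⁻¹
  have hν : 0 < 1 - ν := by linarith
  have hv : 0 < v := by positivity
  have hvα : v ^ α = (1 - ν) / l0 := Real.rpow_inv_rpow (by positivity) hα.ne'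
  have hΦv : holderPrimitive l0 α ν v = (1 - ν) * v / (α + 1) + ν * v := by
    rw [holderPrimitive, Real.rpow_add_one hv.ne', hvα]
    field_simp
  suffices η < α / (1 + α) * ((1 - ν) * v) by
    rw [hΦv]
    have e : α / (1 + α) * ((1 - ν) * v) = v - ((1 - ν) * v / (α + 1) + ν * v) := by
      field_simp; ring
    linarith
  refine (Real.rpow_lt_rpow_iff hη (by positivity) hα).1 ?_
  refine lt_of_mul_lt_mul_left (hcond.trans_eq ?_) hl0.le
  rw [Real.mul_rpow (by positivity) (by positivity), Real.mul_rpow hν.le hv.le, hvα,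
    Real.rpow_add_one hν.ne']
  field_simp

theorem exists_root_holderBound_lt_one (hl0 : 0 < l0) (hα : 0 < α) (hν1 : ν < 1)
    {η : ℝ} (hη : 0 ≤ η) (hcond : l0 * η ^ α < (1 - ν) ^ (α + 1) * (α / (1 + α)) ^ α)
    {s : ℝ} (hs : 0 ≤ s) (hs_root : η + holderPrimitive l0 α ν s = s) :
    ∃ r, 0 ≤ r ∧ r ≤ s ∧ η + holderPrimitive l0 α ν r = r ∧ l0 * r ^ α + ν < 1 := by
  set v := ((1 - ν) / l0) ^ α⁻¹
  have hv_lt := add_holderPrimitive_lt_of_holderCondition hl0 hα hν1 hη hcond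
  have hvα : l0 * v ^ α + ν = 1 := by
    rw [Real.rpow_inv_rpow (div_nonneg (by linarith) hl0.le) hα.ne', mul_div_cancel₀ _ hl0.ne',
      sub_add_cancel]
  have hcont : Continuous fun t => η + holderPrimitive l0 α ν t - t :=
    (continuous_const.add (continuous_iff_continuousAt.2 fun t =>
      (hasDerivAt_holderPrimitive hα.le t).continuousAt)).sub continuous_id
  have hmin : 0 ≤ min v s := le_min (by positivity) hs
  obtain ⟨r, ⟨hr0, hr_min⟩, hr_root⟩ :
      ∃ r ∈ Icc 0 (min v s), η + holderPrimitive l0 α ν r - r = 0 := by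
    refine intermediate_value_Icc' hmin hcont.continuousOn ⟨?_, ?_⟩
    · rcases min_choice v s with h | h <;> rw [h] <;> linarith
    · simpa [holderPrimitive_zero hα.le] using hη
  have hrv : r < v := (hr_min.trans (min_le_left _ _)).lt_of_ne fun h => by
    rw [h] at hr_root; linarith
  refine ⟨r, hr0, hr_min.trans (min_le_right _ _), by linarith, ?_⟩
  exact hvα ▸ strictMonoOn_holderBound hl0 hα hr0 (hr0.trans hrv.le) hrv

end Holder

theorem stmt_14_general {X Y : Type*}
    [NormedAddCommGroup X] [NormedSpace ℝ X]
    [NormedAddCommGroup Y] [NormedSpace ℝ Y]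
    (D : Set X)
    (F : X → Y) (F' : X → X →L[ℝ] Y)
    (hF : ∀ x ∈ D, HasFDerivAt F (F' x) x)
    (B : Y ≃L[ℝ] X)
    (x0 : X) (R : ℝ) (hball : closedBall x0 R ⊆ D)
    (l0 η α ν : ℝ) (hl0 : 0 < l0) (hη : 0 < η)
    (hα : α ∈ Ioc (0:ℝ) 1) (hν1 : ν < 1)
    (hbound : ∀ x ∈ closedBall x0 R,
      ‖ContinuousLinearMap.id ℝ X - (B : Y →L[ℝ] X).comp (F' x)‖ ≤ l0 * ‖x - x0‖ ^ α + ν)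
    (hBF0 : ‖B (F x0)‖ ≤ η)
    (g : ℝ → ℝ) (hg : ∀ v, g v = l0 * v ^ (α + 1) / (1 + α) - (1 - ν) * v + η)
    (hcond : l0 * η ^ α < (1 - ν) ^ (α + 1) * (α / (1 + α)) ^ α)
    (vss : ℝ) (hvss : vss ∈ Icc (0:ℝ) R) (hvroot : g vss = 0) :
    ∀ x ∈ ball x0 vss, ∀ y ∈ ball x0 vss, F x = 0 → F y = 0 → x = y := by
  intro x hx y hy hFx hFy
  set P : X → X := fun z => z - B (F z)
  have hP : ∀ z ∈ closedBall x0 R,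
      HasFDerivAt P (ContinuousLinearMap.id ℝ X - (B : Y →L[ℝ] X).comp (F' z)) z := fun z hz =>
    (hasFDerivAt_id z).sub ((B : Y →L[ℝ] X).hasFDerivAt.comp z (hF z (hball hz)))
  have hvss_root : η + holderPrimitive l0 α ν vss = vss := by
    have h := hg vss
    rw [hvroot, add_comm 1 α] at h
    rw [holderPrimitive]
    linarith
  obtain ⟨r, hr0, hr_vss, hr_root, hφr⟩ :=
    exists_root_holderBound_lt_one hl0 hα.1 hν1 hη.le hcond hvss.1 hvss_root
  have hΦ := hasDerivAt_holderPrimitive (l0 := l0) (ν := ν) hα.1.le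
  have hφ := strictMonoOn_holderBound (ν := ν) hl0 hα.1
  have hattract : ∀ p ∈ ball x0 vss, F p = 0 → Tendsto (fun n => P^[n] x0) atTop (𝓝 p) :=
    fun p hp hFp => tendsto_iterate_of_majorant hP hbound hΦ hφ.monotoneOn
      (by simpa [P] using hBF0) hr0 (hr_vss.trans hvss.2) hvss.2
      (by rw [holderPrimitive_zero hα.1.le]; linarith) hφr
      (fun a ha => slope_lt_one_of_add_eq_self
        (strictConvexOn_of_hasDerivAt_of_strictMonoOn (convex_Ici 0) hΦ hφ)
        hr0 hr_root hvss_root ha.1 ha.2) hp (by simp [P, hFp])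
  exact tendsto_nhds_unique (hattract x hx hFx) (hattract y hy hFy)

theorem stmt_14 {X Y : Type*}
    [NormedAddCommGroup X] [NormedSpace ℝ X] [CompleteSpace X]
    [NormedAddCommGroup Y] [NormedSpace ℝ Y] [CompleteSpace Y]
    (D : Set X) (hD : IsOpen D)
    (F : X → Y) (F' : X → X →L[ℝ] Y)
    (hF : ∀ x ∈ D, HasFDerivAt F (F' x) x) (hF'cont : ContinuousOn F' D)
    (B : Y ≃L[ℝ] X)
    (x0 : X) (R : ℝ) (hR : 0 < R) (hball : closedBall x0 R ⊆ D)
    (l0 η α ν : ℝ) (hl0 : 0 < l0) (hη : 0 < η)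
    (hα : α ∈ Ioc (0:ℝ) 1) (hν0 : 0 ≤ ν) (hν1 : ν < 1)
    (hbound : ∀ x ∈ closedBall x0 R,
      ‖ContinuousLinearMap.id ℝ X - (B : Y →L[ℝ] X).comp (F' x)‖ ≤ l0 * ‖x - x0‖ ^ α + ν)
    (hBF0 : ‖B (F x0)‖ ≤ η)
    (g : ℝ → ℝ) (hg : ∀ v, g v = l0 * v ^ (α + 1) / (1 + α) - (1 - ν) * v + η)
    (hcond : l0 * η ^ α < (1 - ν) ^ (α + 1) * (α / (1 + α)) ^ α)
    (vss : ℝ) (hvss : vss ∈ Icc (0:ℝ) R) (hvroot : g vss = 0)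
    (hvmax : ∀ w ∈ Icc (0:ℝ) R, g w = 0 → w ≤ vss)
    (hRv : vss ≤ R) :
    ∀ x ∈ ball x0 vss, ∀ y ∈ ball x0 vss, F x = 0 → F y = 0 → x = y :=
  stmt_14_general D F F' hF B x0 R hball l0 η α ν hl0 hη hα hν1 hbound hBF0 g hg hcond vss hvss
    hvroot
end
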